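/- Let (A₁, (f₁,g₁)) and (A₂, (f₂,g₂)) be dibaric algebras with spaces of invariant linear forms J₁ = J_{f₁} and J₂ = J_{f₂}, and let h : A₁ → A₂ be a dibaric algebra homomorphism. If the image of h contains A₂² (the span of all products in A₂), then the pullback h* (given by h*F = F ∘ h) is injective on J₂: if F ∈ J₂ and F ∘ h = 0, then F = 0. -/

import Mathlib

/-! An `f`-invariant form `F` that vanishes on `A²` satisfies `f a * F b + f b * F a = 0` for all
`a, b`. Taking `a = b = u` with `f u ≠ 0` gives `F u = 0`, and then `a = u` gives `F b = 0`.
Since `F ∘ h = 0` and `A₂² ⊆ Im h`, the form `F` indeed vanishes on `A₂²`. -/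

theorem LinearMap.eq_zero_of_invariant_of_map_mul_eq_zero {K A : Type*} [Field K]
    [NeZero (2 : K)] [AddCommGroup A] [Module K A] (mul : A →ₗ[K] A →ₗ[K] A)
    {f F : A →ₗ[K] K} (hf : f ≠ 0)
    (hinv : ∀ a b : A, F (mul a b) = (f a * F b + f b * F a) / 2)
    (hmul : ∀ a b : A, F (mul a b) = 0) : F = 0 := by
  have hsum : ∀ a b : A, f a * F b + f b * F a = 0 := fun a b => by
    simpa [hmul, NeZero.ne] using (hinv a b).symm
  obtain ⟨u, hu⟩ : ∃ u, f u ≠ 0 := by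
    by_contra! hc
    exact hf (LinearMap.ext hc)
  have hFu : F u = 0 := by
    have h2 : (2 : K) * (f u * F u) = 0 := by linear_combination hsum u u
    simpa [NeZero.ne, hu] using h2
  ext b
  simpa [hFu, hu] using hsum u b

theorem stmt_13 (A₁ A₂ : Type*) [AddCommGroup A₁] [Module ℝ A₁]
    [AddCommGroup A₂] [Module ℝ A₂]
    (mul₂ : A₂ →ₗ[ℝ] A₂ →ₗ[ℝ] A₂)
    (f₂ : A₂ →ₗ[ℝ] ℝ) (hf₂ : f₂ ≠ 0)
    (h : A₁ →ₗ[ℝ] A₂)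
    (him : Submodule.span ℝ {z : A₂ | ∃ a b : A₂, z = mul₂ a b} ≤ LinearMap.range h)
    (F : A₂ →ₗ[ℝ] ℝ)
    (hFinv : ∀ a b : A₂, F (mul₂ a b) = (f₂ a * F b + f₂ b * F a) / 2)
    (hFh : ∀ x : A₁, F (h x) = 0) :
    F = 0 := by
  refine LinearMap.eq_zero_of_invariant_of_map_mul_eq_zero mul₂ hf₂ hFinv fun a b => ?_
  obtain ⟨x, hx⟩ := him (Submodule.subset_span ⟨a, b, rfl⟩)
  rw [← hx, hFh]
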